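/- Let n ≥ 2 and let σ : ℤ → ℤ be an n-periodic bijection that is balanced (Σ_{i=1}^n σ(i) = n(n+1)/2) and whose length ℓ(σ) = Σ_{1 ≤ i < j ≤ n} |⌊(σ(j)-σ(i))/n⌋| is minimal among all balanced n-periodic bijections agreeing with σ mod n. Then |σ(i) − i| < n for every i ∈ {1,...,n}. -/

import Mathlib

/-!
Suppose `x < y < x + n` but `σ y ≤ σ x - n`. Adding `-n` to `σ` on the residue class of `x` and
`+n` on that of `y` keeps `σ` a balanced affine permutation in the same class mod `n`, and
lowers Shi's length by at least 2: the pair of classes itself loses 2, and every other class `k`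
loses 1 against one of them while gaining at most 1 against the other. So at a minimal `σ`,
`σ x - n < σ y` whenever `x < y < x + n`.

If then `σ i ≥ i + n`, the `n - 1` distinct values `σ z`, `i < z < i + n`, all exceed `i`,
while `σ (i + n) = σ i + n ≥ i + 2n`; their sum exceeds that of `(i, i + n]`, contradicting
the balance of `σ` on that window. The bound `σ i > i - n` is symmetric.
-/

/-- Shi length statistic of an n-periodic bijection. -/
noncomputable def affineLength (n : ℤ) (σ : ℤ → ℤ) : ℤ :=
  ∑ i ∈ Finset.Icc (1 : ℤ) n, ∑ j ∈ Finset.Icc (1 : ℤ) n,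
    if i < j then |Int.fdiv (σ j - σ i) n| else 0

open Finset Function

section Arithmetic

variable {α : Type*} [AddCommGroup α] [LinearOrder α] [IsOrderedAddMonoid α]

lemma abs_add_sub_abs_of_nonneg_of_le_neg {u w : α} (hw : 0 ≤ w) (hu : u ≤ -w) :
    |u + w| - |u| = -w := by
  rw [abs_of_nonpos (le_neg_iff_add_nonpos_right.1 hu), abs_of_nonpos (hu.trans (neg_nonpos.2 hw))]
  abel

lemma abs_add_sub_abs_of_nonpos_of_neg_le {u w : α} (hw : w ≤ 0) (hu : -w ≤ u) :
    |u + w| - |u| = w := by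
  rw [abs_of_nonneg (neg_le_iff_add_nonneg.1 hu), abs_of_nonneg ((neg_nonneg.2 hw).trans hu)]
  abel

end Arithmetic

lemma Finset.sum_sum_eq_of_eq_zero_off_pair {ι M : Type*} [DecidableEq ι] [AddCommMonoid M]
    {s : Finset ι} {f : ι → ι → M} {a b : ι} (ha : a ∈ s) (hb : b ∈ s) (hab : a ≠ b)
    (hdiag : ∀ p, f p p = 0)
    (hoff : ∀ p ∈ s, ∀ q ∈ s, p ≠ a → p ≠ b → q ≠ a → q ≠ b → f p q = 0) :
    ∑ p ∈ s, ∑ q ∈ s, f p q =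
      f a b + f b a + ∑ k ∈ (s.erase a).erase b, ((f k a + f a k) + (f k b + f b k)) := by
  set t := (s.erase a).erase b
  have hsplit : ∀ g : ι → M, ∑ p ∈ s, g p = g a + (g b + ∑ p ∈ t, g p) := fun g => by
    rw [add_sum_erase _ _ (mem_erase.2 ⟨hab.symm, hb⟩), add_sum_erase _ _ ha]
  have ht : ∀ p ∈ t, ∑ q ∈ t, f p q = 0 := fun p hp => sum_eq_zero fun q hq => by
    simp only [t, mem_erase] at hp hq
    exact hoff p hp.2.2 q hq.2.2 hp.2.1 hp.1 hq.2.1 hq.1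
  simp only [hsplit, sum_add_distrib, sum_congr rfl ht, hdiag, sum_const_zero]
  abel

section ShiTerm

variable {n : ℤ} {σ c : ℤ → ℤ} {p q : ℤ}

def shiTerm (n : ℤ) (σ : ℤ → ℤ) (p q : ℤ) : ℤ :=
  if p < q then |(σ q - σ p) / n| else 0

lemma affineLength_eq_sum_shiTerm (hn : 0 ≤ n) (σ : ℤ → ℤ) :
    affineLength n σ = ∑ p ∈ Icc 1 n, ∑ q ∈ Icc 1 n, shiTerm n σ p q := by
  simp only [affineLength, shiTerm, Int.fdiv_eq_ediv_of_nonneg _ hn]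

def shiTermDiff (n : ℤ) (σ c : ℤ → ℤ) (p q : ℤ) : ℤ :=
  shiTerm n (fun z => σ z + c z * n) p q - shiTerm n σ p q

lemma shiTermDiff_of_not_lt (h : ¬ p < q) : shiTermDiff n σ c p q = 0 := by
  simp [shiTermDiff, shiTerm, h]

lemma shiTermDiff_of_lt (hn : 0 < n) (h : p < q) :
    shiTermDiff n σ c p q = |(σ q - σ p) / n + (c q - c p)| - |(σ q - σ p) / n| := by
  have : σ q + c q * n - (σ p + c p * n) = σ q - σ p + (c q - c p) * n := by ring
  simp [shiTermDiff, shiTerm, h, this, Int.add_mul_ediv_right _ _ hn.ne']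

lemma shiTermDiff_of_eq (hn : 0 < n) (h : c p = c q) : shiTermDiff n σ c p q = 0 := by
  by_cases hpq : p < q
  · simp [shiTermDiff_of_lt hn hpq, h]
  · exact shiTermDiff_of_not_lt hpq

lemma shiTermDiff_add_swap_le (hn : 0 < n) (p q : ℤ) :
    shiTermDiff n σ c p q + shiTermDiff n σ c q p ≤ |c q - c p| := by
  rcases lt_trichotomy p q with h | rfl | h
  · rw [shiTermDiff_of_lt hn h, shiTermDiff_of_not_lt (lt_asymm h), add_zero]
    exact sub_le_iff_le_add'.2 (abs_add_le _ _)
  · simp [shiTermDiff_of_not_lt]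
  · rw [shiTermDiff_of_lt hn h, shiTermDiff_of_not_lt (lt_asymm h), zero_add, abs_sub_comm]
    exact sub_le_iff_le_add'.2 (abs_add_le _ _)

lemma shiTermDiff_add_swap_of_nonneg (hn : 0 < n) (hpq : p < q) (hc : 0 ≤ c q - c p)
    (hσ : σ q - σ p < (1 - (c q - c p)) * n) :
    shiTermDiff n σ c p q + shiTermDiff n σ c q p = -(c q - c p) := by
  rw [shiTermDiff_of_lt hn hpq, shiTermDiff_of_not_lt (lt_asymm hpq), add_zero,
    abs_add_sub_abs_of_nonneg_of_le_neg hc]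
  have := (Int.ediv_lt_iff_lt_mul hn).2 hσ
  omega

lemma shiTermDiff_add_swap_of_nonpos (hn : 0 < n) (hpq : p < q) (hc : c q - c p ≤ 0)
    (hσ : -(c q - c p) * n ≤ σ q - σ p) :
    shiTermDiff n σ c p q + shiTermDiff n σ c q p = c q - c p := by
  rw [shiTermDiff_of_lt hn hpq, shiTermDiff_of_not_lt (lt_asymm hpq), add_zero,
    abs_add_sub_abs_of_nonpos_of_neg_le hc ((Int.le_ediv_iff_mul_le hn).2 hσ)]

end ShiTerm

section LengthDrop

variable {n : ℤ} {σ c : ℤ → ℤ} {I J : ℤ}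

lemma shiTermDiff_add_swap_around_pair_nonpos (hn : 0 < n) (hcI : c I = -1) (hcJ : c J = 1)
    {k : ℤ} (hck : c k = 0) (hkI : k ≠ I) (hkJ : k ≠ J)
    (hcase : (I < J ∧ σ J + n < σ I) ∨ (J < I ∧ σ J + 2 * n ≤ σ I)) :
    (shiTermDiff n σ c k I + shiTermDiff n σ c I k) +
      (shiTermDiff n σ c k J + shiTermDiff n σ c J k) ≤ 0 := by
  have hIle : shiTermDiff n σ c k I + shiTermDiff n σ c I k ≤ 1 := by
    simpa [hcI, hck] using shiTermDiff_add_swap_le (σ := σ) (c := c) hn k I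
  have hJle : shiTermDiff n σ c k J + shiTermDiff n σ c J k ≤ 1 := by
    simpa [hcJ, hck] using shiTermDiff_add_swap_le (σ := σ) (c := c) hn k J
  -- In both cases, `σ k` is too small for the pair `{k, I}` or too large for `{k, J}`.
  have hdrop : shiTermDiff n σ c k I + shiTermDiff n σ c I k = -1 ∨
      shiTermDiff n σ c k J + shiTermDiff n σ c J k = -1 := by
    rcases (by omega : (k < I ∧ σ k + n ≤ σ I) ∨ (I < k ∧ σ k < σ I) ∨
        (k < J ∧ σ J < σ k) ∨ (J < k ∧ σ J + n ≤ σ k)) with ⟨h, hσ⟩ | ⟨h, hσ⟩ | ⟨h, hσ⟩ | ⟨h, hσ⟩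
    · left
      simpa [hcI, hck] using shiTermDiff_add_swap_of_nonpos (σ := σ) (c := c) hn h
        (by simp [hcI, hck]) (by simp [hcI, hck]; linarith)
    · left
      rw [add_comm]
      simpa [hcI, hck] using shiTermDiff_add_swap_of_nonneg (σ := σ) (c := c) hn h
        (by simp [hcI, hck]) (by simp [hcI, hck]; linarith)
    · right
      simpa [hcJ, hck] using shiTermDiff_add_swap_of_nonneg (σ := σ) (c := c) hn h
        (by simp [hcJ, hck]) (by simp [hcJ, hck]; linarith)
    · right
      rw [add_comm]
      simpa [hcJ, hck] using shiTermDiff_add_swap_of_nonpos (σ := σ) (c := c) hn h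
        (by simp [hcJ, hck]) (by simp [hcJ, hck]; linarith)
  omega

lemma shiTermDiff_add_swap_eq_neg_two (hn : 0 < n) (hcI : c I = -1) (hcJ : c J = 1)
    (hcase : (I < J ∧ σ J + n < σ I) ∨ (J < I ∧ σ J + 2 * n ≤ σ I)) :
    shiTermDiff n σ c I J + shiTermDiff n σ c J I = -2 := by
  rcases hcase with ⟨h, hσ⟩ | ⟨h, hσ⟩
  · have := shiTermDiff_add_swap_of_nonneg (σ := σ) (c := c) hn h
      (by simp [hcI, hcJ]) (by simp [hcI, hcJ]; linarith)
    simpa [hcI, hcJ] using this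
  · have := shiTermDiff_add_swap_of_nonpos (σ := σ) (c := c) hn h
      (by simp [hcI, hcJ]) (by simp [hcI, hcJ]; linarith)
    rw [add_comm]
    simpa [hcI, hcJ] using this

theorem affineLength_add_mul_add_two_le (hn : 0 < n) (hI : I ∈ Icc 1 n) (hJ : J ∈ Icc 1 n)
    (hcI : c I = -1) (hcJ : c J = 1) (hc : ∀ k ∈ Icc 1 n, k ≠ I → k ≠ J → c k = 0)
    (hcase : (I < J ∧ σ J + n < σ I) ∨ (J < I ∧ σ J + 2 * n ≤ σ I)) :
    affineLength n (fun z => σ z + c z * n) + 2 ≤ affineLength n σ := by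
  have hIJ : I ≠ J := by rintro rfl; omega
  have hdiff : affineLength n (fun z => σ z + c z * n) - affineLength n σ =
      ∑ p ∈ Icc 1 n, ∑ q ∈ Icc 1 n, shiTermDiff n σ c p q := by
    simp only [affineLength_eq_sum_shiTerm hn.le, ← sum_sub_distrib, shiTermDiff]
  rw [sum_sum_eq_of_eq_zero_off_pair hI hJ hIJ (fun p => shiTermDiff_of_not_lt (lt_irrefl p))
    (fun p hp q hq hpI hpJ hqI hqJ =>
      shiTermDiff_of_eq hn (by rw [hc p hp hpI hpJ, hc q hq hqI hqJ])),
    shiTermDiff_add_swap_eq_neg_two hn hcI hcJ hcase] at hdiff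
  have hrest := sum_nonpos (s := ((Icc 1 n).erase I).erase J) fun k hk => by
    simp only [mem_erase] at hk
    exact shiTermDiff_add_swap_around_pair_nonpos hn hcI hcJ (hc k hk.2.2 hk.2.1 hk.1) hk.2.1 hk.1
      hcase
  linarith

end LengthDrop

section Periodic

variable {n : ℤ} {σ c : ℤ → ℤ}

lemma apply_add_mul_of_apply_add (hper : ∀ i, σ (i + n) = σ i + n) (z k : ℤ) :
    σ (z + k * n) = σ z + k * n := by
  have hg : Periodic (fun i => σ i - i) n := fun i => by simp only [hper]; ring
  have := hg.int_mul k z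
  simp only [Int.cast_id] at this
  linarith

lemma bijective_add_mul_of_periodic (hbij : Bijective σ) (hper : ∀ i, σ (i + n) = σ i + n)
    (hc : Periodic c n) : Bijective fun z => σ z + c z * n := by
  have hshift : Bijective fun z => z + c z * n := by
    refine bijective_iff_has_inverse.2 ⟨fun z => z - c z * n, fun z => ?_, fun z => ?_⟩
    · have := hc.int_mul (c z) z
      rw [Int.cast_id] at this
      simp only [this, add_sub_cancel_right]
    · have := hc.sub_int_mul_eq (c z) (x := z)
      rw [Int.cast_id] at this
      simp only [this, sub_add_cancel]
  have : (fun z => σ z + c z * n) = σ ∘ fun z => z + c z * n :=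
    funext fun z => (apply_add_mul_of_apply_add hper z (c z)).symm
  exact this ▸ hbij.comp hshift

def windowRep (n z : ℤ) : ℤ := (z - 1) % n + 1

lemma windowRep_mem (hn : 0 < n) (z : ℤ) : windowRep n z ∈ Icc 1 n := by
  have := Int.emod_nonneg (z - 1) hn.ne'
  have := Int.emod_lt_of_pos (z - 1) hn
  simp only [windowRep, mem_Icc]
  omega

lemma windowRep_of_mem {z : ℤ} (hz : z ∈ Icc 1 n) : windowRep n z = z := by
  rw [mem_Icc] at hz
  rw [windowRep, Int.emod_eq_of_lt (by omega) (by omega), sub_add_cancel]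

lemma periodic_windowRep (n : ℤ) : Periodic (windowRep n) n := fun z => by
  rw [windowRep, windowRep, show z + n - 1 = z - 1 + 1 * n by ring, Int.add_mul_emod_self_right]

lemma exists_windowRep_add_mul (n z : ℤ) : ∃ k, windowRep n z + k * n = z :=
  ⟨(z - 1) / n, by rw [windowRep, add_right_comm, Int.emod_add_ediv_mul, sub_add_cancel]⟩

end Periodic

section Minimality

variable {n : ℤ} {σ : ℤ → ℤ} {I J : ℤ}

/-- Adding `pairShift n I J z * n` to `σ` lowers the residue class of `I` by `n` and raises
that of `J` by `n`. -/
def pairShift (n I J z : ℤ) : ℤ :=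
  if windowRep n z = J then 1 else if windowRep n z = I then -1 else 0

lemma periodic_pairShift (n I J : ℤ) : Periodic (pairShift n I J) n := fun z => by
  simp only [pairShift, periodic_windowRep n z]

lemma sum_pairShift (hI : I ∈ Icc 1 n) (hJ : J ∈ Icc 1 n) (hIJ : I ≠ J) :
    ∑ z ∈ Icc 1 n, pairShift n I J z = 0 := by
  rw [sum_eq_add_of_mem I J hI hJ hIJ fun k hk hkIJ => by
    simp [pairShift, windowRep_of_mem hk, hkIJ.1, hkIJ.2]]
  simp [pairShift, windowRep_of_mem hI, windowRep_of_mem hJ, hIJ]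

theorem exists_shorter_of_inversion (hn : 0 < n) (hbij : Bijective σ)
    (hper : ∀ i, σ (i + n) = σ i + n)
    (hbal : ∑ i ∈ Icc (1 : ℤ) n, σ i = ∑ i ∈ Icc (1 : ℤ) n, i)
    (hI : I ∈ Icc 1 n) (hJ : J ∈ Icc 1 n)
    (hcase : (I < J ∧ σ J + n < σ I) ∨ (J < I ∧ σ J + 2 * n ≤ σ I)) :
    ∃ σ' : ℤ → ℤ, Bijective σ' ∧ (∀ i, σ' (i + n) = σ' i + n) ∧
      ∑ i ∈ Icc (1 : ℤ) n, σ' i = ∑ i ∈ Icc (1 : ℤ) n, i ∧ (∀ i, σ' i ≡ σ i [ZMOD n]) ∧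
      affineLength n σ' + 2 ≤ affineLength n σ := by
  have hIJ : I ≠ J := by rintro rfl; omega
  refine ⟨fun z => σ z + pairShift n I J z * n,
    bijective_add_mul_of_periodic hbij hper (periodic_pairShift n I J), fun i => ?_, ?_,
    fun i => Int.add_mul_emod_self_right _ _ _, ?_⟩
  · simp only [hper, periodic_pairShift n I J i]
    ring
  · rw [sum_add_distrib, ← sum_mul, sum_pairShift hI hJ hIJ, zero_mul, add_zero, hbal]
  · refine affineLength_add_mul_add_two_le hn hI hJ ?_ ?_ (fun k hk hkI hkJ => ?_) hcase <;>
      simp [pairShift, windowRep_of_mem, *]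

end Minimality

def NoWideInversion (n : ℤ) (σ : ℤ → ℤ) : Prop :=
  ∀ x y, x < y → y < x + n → σ x - n < σ y

theorem noWideInversion_of_minimal {n : ℤ} {σ : ℤ → ℤ} (hn : 0 < n) (hbij : Bijective σ)
    (hper : ∀ i, σ (i + n) = σ i + n)
    (hbal : ∑ i ∈ Icc (1 : ℤ) n, σ i = ∑ i ∈ Icc (1 : ℤ) n, i)
    (hmin : ∀ σ' : ℤ → ℤ, Bijective σ' → (∀ i : ℤ, σ' (i + n) = σ' i + n) →
      (∑ i ∈ Icc (1 : ℤ) n, σ' i = ∑ i ∈ Icc (1 : ℤ) n, i) →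
      (∀ i : ℤ, σ' i ≡ σ i [ZMOD n]) → affineLength n σ ≤ affineLength n σ') :
    NoWideInversion n σ := by
  have hshift := apply_add_mul_of_apply_add hper
  suffices h : ∀ x ∈ Icc 1 n, ∀ y, x < y → y < x + n → σ x - n < σ y by
    intro x y hxy hyx
    obtain ⟨k, hk⟩ := exists_windowRep_add_mul n x
    have := h _ (windowRep_mem hn x) (y - k * n) (by linarith) (by linarith)
    have hy := hshift (y - k * n) k
    rw [sub_add_cancel] at hy
    rw [← hk, hshift]
    linarith
  intro x hx y hxy hyx
  by_contra! hσ
  -- `J` is `y` or `y - n`; in the first case `σ y ≠ σ (x - n)` by injectivity.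
  obtain ⟨J, hJ, hcase⟩ :
      ∃ J ∈ Icc 1 n, (x < J ∧ σ J + n < σ x) ∨ (J < x ∧ σ J + 2 * n ≤ σ x) := by
    have hxn := hshift x (-1)
    have hx' := mem_Icc.1 hx
    by_cases hy : y ≤ n
    · have hne : σ y ≠ σ (x + -1 * n) := fun h => by have := hbij.1 h; omega
      exact ⟨y, mem_Icc.2 ⟨by omega, hy⟩, Or.inl ⟨hxy, by omega⟩⟩
    · have hyn := hshift (y - n) 1
      rw [one_mul, sub_add_cancel] at hyn
      exact ⟨y - n, mem_Icc.2 ⟨by omega, by omega⟩, Or.inr ⟨by omega, by omega⟩⟩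
  obtain ⟨σ', hbij', hper', hbal', hmod, hlt⟩ :=
    exists_shorter_of_inversion hn hbij hper hbal hx hJ hcase
  linarith [hmin σ' hbij' hper' hbal' hmod]

lemma Function.Periodic.sum_Ioc_add_eq {M : Type*} [AddCancelCommMonoid M] {g : ℤ → M} {n : ℤ}
    (hg : Periodic g n) (hn : 0 ≤ n) (a : ℤ) :
    ∑ x ∈ Ioc a (a + n), g x = ∑ x ∈ Ioc 0 n, g x := by
  have step : ∀ a, ∑ x ∈ Ioc (a + 1) (a + 1 + n), g x = ∑ x ∈ Ioc a (a + n), g x := fun a => by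
    have h := congrArg (fun s => ∑ x ∈ s, g x)
      (show insert (a + 1) (Ioc (a + 1) (a + 1 + n)) = insert (a + 1 + n) (Ioc a (a + n)) by
        ext; simp only [mem_insert, mem_Ioc]; omega)
    rwa [sum_insert (by simp), sum_insert (by simp), hg, add_left_cancel_iff] at h
  induction a using Int.induction_on with
  | zero => simp
  | succ m ih => rw [step, ih]
  | pred m ih => rw [← ih, ← step, sub_add_cancel]

lemma sum_Ioc_eq_of_balanced {n : ℤ} {σ : ℤ → ℤ} (hn : 0 ≤ n) (hper : ∀ i, σ (i + n) = σ i + n)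
    (hbal : ∑ i ∈ Icc (1 : ℤ) n, σ i = ∑ i ∈ Icc (1 : ℤ) n, i) (a : ℤ) :
    ∑ x ∈ Ioc a (a + n), σ x = ∑ x ∈ Ioc a (a + n), x := by
  have hg : Periodic (fun i => σ i - i) n := fun i => by simp only [hper]; ring
  rw [← sub_eq_zero, ← sum_sub_distrib, hg.sum_Ioc_add_eq hn, sum_sub_distrib, sub_eq_zero,
    ← Icc_add_one_left_eq_Ioc, zero_add, hbal]

section Bounds

variable {n : ℤ} {σ : ℤ → ℤ}

lemma apply_lt_add_of_noWideInversion (hn : 0 < n) (hinj : Injective σ)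
    (hper : ∀ i, σ (i + n) = σ i + n)
    (hwin : ∀ a, ∑ x ∈ Ioc a (a + n), σ x = ∑ x ∈ Ioc a (a + n), x)
    (hP : NoWideInversion n σ) (i : ℤ) : σ i < i + n := by
  by_contra! h
  have hT : ∀ v ∈ (Ioo i (i + n)).image σ, i + 1 ≤ v := by
    simp only [mem_image, mem_Ioo]
    rintro _ ⟨z, hz, rfl⟩
    linarith [hP i z hz.1 hz.2]
  have hcard : (#((Ioo i (i + n)).image σ) : ℤ) = n - 1 := by
    rw [card_image_of_injective _ hinj, Int.card_Ioo]
    omega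
  have hlow := sum_Ico_le_sum hT
  rw [hcard, sum_image hinj.injOn, show Ico (i + 1) (i + 1 + (n - 1)) = Ioo i (i + n) by
    ext; simp only [mem_Ico, mem_Ioo]; omega] at hlow
  have hsum := hwin i
  rw [← Ioo_insert_right (by omega), sum_insert (by simp), sum_insert (by simp), hper] at hsum
  linarith

lemma sub_lt_apply_of_noWideInversion (hn : 0 < n) (hinj : Injective σ)
    (hper : ∀ i, σ (i + n) = σ i + n)
    (hwin : ∀ a, ∑ x ∈ Ioc a (a + n), σ x = ∑ x ∈ Ioc a (a + n), x)
    (hP : NoWideInversion n σ) (i : ℤ) : i - n < σ i := by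
  by_contra! h
  have hT : ∀ v ∈ (Ioo (i - n) i).image σ, v ≤ i - 1 := by
    simp only [mem_image, mem_Ioo]
    rintro _ ⟨z, hz, rfl⟩
    linarith [hP z i hz.2 (by linarith)]
  have hcard : (#((Ioo (i - n) i).image σ) : ℤ) = n - 1 := by
    rw [card_image_of_injective _ hinj, Int.card_Ioo]
    omega
  have hup := sum_le_sum_Ioc hT
  rw [hcard, sum_image hinj.injOn, show Ioc (i - 1 - (n - 1)) (i - 1) = Ioo (i - n) i by
    ext; simp only [mem_Ioc, mem_Ioo]; omega] at hup
  have hsum := hwin (i - n - 1)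
  have hi := hper (i - n)
  rw [sub_add_cancel] at hi
  rw [show Ioc (i - n - 1) (i - n - 1 + n) = insert (i - n) (Ioo (i - n) i) by
    ext; simp only [mem_insert, mem_Ioc, mem_Ioo]; omega, sum_insert (by simp),
    sum_insert (by simp)] at hsum
  linarith

end Bounds

theorem stmt_7_general (n : ℤ) (hn : 2 ≤ n) (σ : ℤ → ℤ)
    (hbij : Function.Bijective σ) (hper : ∀ i : ℤ, σ (i + n) = σ i + n)
    (hbal : ∑ i ∈ Finset.Icc (1 : ℤ) n, σ i = ∑ i ∈ Finset.Icc (1 : ℤ) n, i)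
    (hmin : ∀ σ' : ℤ → ℤ, Function.Bijective σ' → (∀ i : ℤ, σ' (i + n) = σ' i + n) →
      (∑ i ∈ Finset.Icc (1 : ℤ) n, σ' i = ∑ i ∈ Finset.Icc (1 : ℤ) n, i) →
      (∀ i : ℤ, σ' i ≡ σ i [ZMOD n]) → affineLength n σ ≤ affineLength n σ')
    (i : ℤ) :
    |σ i - i| < n := by
  have hn0 : 0 < n := by omega
  have hwin := sum_Ioc_eq_of_balanced hn0.le hper hbal
  have hP := noWideInversion_of_minimal hn0 hbij hper hbal hmin
  have hup := apply_lt_add_of_noWideInversion hn0 hbij.1 hper hwin hP i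
  have hlow := sub_lt_apply_of_noWideInversion hn0 hbij.1 hper hwin hP i
  rw [abs_sub_lt_iff]
  constructor <;> linarith

/-- A minimal balanced representative of a circular permutation moves each point
less than n: |σ(i) − i| < n for all i ∈ {1,…,n}. -/
theorem stmt_7 (n : ℤ) (hn : 2 ≤ n) (σ : ℤ → ℤ)
    (hbij : Function.Bijective σ) (hper : ∀ i : ℤ, σ (i + n) = σ i + n)
    (hbal : ∑ i ∈ Finset.Icc (1 : ℤ) n, σ i = ∑ i ∈ Finset.Icc (1 : ℤ) n, i)
    (hmin : ∀ σ' : ℤ → ℤ, Function.Bijective σ' → (∀ i : ℤ, σ' (i + n) = σ' i + n) →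
      (∑ i ∈ Finset.Icc (1 : ℤ) n, σ' i = ∑ i ∈ Finset.Icc (1 : ℤ) n, i) →
      (∀ i : ℤ, σ' i ≡ σ i [ZMOD n]) → affineLength n σ ≤ affineLength n σ')
    (i : ℤ) (hi : 1 ≤ i) (hin : i ≤ n) :
    |σ i - i| < n :=
  stmt_7_general n hn σ hbij hper hbal hmin i
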